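/- In the naive Milnor–Witt K-theory ring K'^{MW}_*(R), every element ⟨a⟩ = 1 + η[a] (a ∈ R^×) is central: it commutes with η and with every generator [b] for b ∈ R^×. Consequently the degree-0 part K'^{MW}_0(R) is a commutative ring contained in the center of K'^{MW}_*(R). -/
import Mathlib


/-! Naive Milnor–Witt K-theory of a commutative ring `R`, defined as the quotient of the
free (noncommutative) `ℤ`-algebra on symbols `[a]` for units `a : Rˣ` and a symbol `η`,
by the Steinberg, logarithmic, centrality and hyperbolic relations. -/

open FreeAlgebra

inductive KMWGen (R : Type) [CommRing R] : Type
  | sym : Rˣ → KMWGen R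
  | eta : KMWGen R

inductive KMWRel (R : Type) [CommRing R] :
    FreeAlgebra ℤ (KMWGen R) → FreeAlgebra ℤ (KMWGen R) → Prop
  | steinberg (a b : Rˣ) (h : (a : R) + (b : R) = 1) :
      KMWRel R (ι ℤ (KMWGen.sym a) * ι ℤ (KMWGen.sym b)) 0
  | log (a b : Rˣ) :
      KMWRel R (ι ℤ (KMWGen.sym (a * b)))
        (ι ℤ (KMWGen.sym a) + ι ℤ (KMWGen.sym b) +
          ι ℤ KMWGen.eta * ι ℤ (KMWGen.sym a) * ι ℤ (KMWGen.sym b))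
  | central (a : Rˣ) :
      KMWRel R (ι ℤ KMWGen.eta * ι ℤ (KMWGen.sym a))
        (ι ℤ (KMWGen.sym a) * ι ℤ KMWGen.eta)
  | hyperbolic :
      KMWRel R (ι ℤ KMWGen.eta * (2 + ι ℤ KMWGen.eta * ι ℤ (KMWGen.sym (-1)))) 0

/-- The naive Milnor–Witt K-theory ring `K'^{MW}_*(R)`. -/
abbrev KMW (R : Type) [CommRing R] : Type := RingQuot (KMWRel R)

/-- The symbol `[a]` for a unit `a`. -/
def KMW.sym (R : Type) [CommRing R] (a : Rˣ) : KMW R :=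
  RingQuot.mkRingHom (KMWRel R) (ι ℤ (KMWGen.sym a))

/-- The element `η`. -/
def KMW.eta (R : Type) [CommRing R] : KMW R :=
  RingQuot.mkRingHom (KMWRel R) (ι ℤ KMWGen.eta)

/-- The element `⟨a⟩ := 1 + η[a]`. -/
def KMW.form (R : Type) [CommRing R] (a : Rˣ) : KMW R :=
  1 + KMW.eta R * KMW.sym R a

/-- The degree of a generator: `[a]` has degree `1`, `η` has degree `-1`. -/
def KMWGen.weight (R : Type) [CommRing R] : KMWGen R → ℤ
  | .sym _ => 1
  | .eta => -1

/-- The image of a generator in `K'^{MW}_*(R)`. -/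
def KMWGen.elem (R : Type) [CommRing R] : KMWGen R → KMW R
  | .sym a => KMW.sym R a
  | .eta => KMW.eta R

/-- The degree-`n` part of `K'^{MW}_*(R)`: the subgroup generated by all monomials in the
generators `[a]`, `η` of total weight `n`. -/
def KMW.degreePart (R : Type) [CommRing R] (n : ℤ) : Submodule ℤ (KMW R) :=
  Submodule.span ℤ
    { x : KMW R | ∃ l : List (KMWGen R),
        (l.map (KMWGen.weight R)).sum = n ∧ x = (l.map (KMWGen.elem R)).prod }
namespace KMWProof

variable (R : Type) [CommRing R]

lemma eta_sym (a : Rˣ) : KMW.eta R * KMW.sym R a = KMW.sym R a * KMW.eta R := by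
  have h := RingQuot.mkRingHom_rel (KMWRel.central (R := R) a)
  simpa [KMW.eta, KMW.sym, map_mul] using h

lemma eta_comm (x : KMW R) : Commute (KMW.eta R) x := by
  obtain ⟨y, rfl⟩ := RingQuot.mkRingHom_surjective (KMWRel R) x
  induction y using FreeAlgebra.induction with
  | grade0 r =>
      simp only [algebraMap_int_eq, eq_intCast, map_intCast]
      exact Commute.intCast_right
  | grade1 g =>
      cases g with
      | sym a => exact eta_sym R a
      | eta => exact Commute.refl _
  | mul a b ha hb => rw [map_mul]; exact ha.mul_right hb
  | add a b ha hb => rw [map_add]; exact ha.add_right hb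

lemma log (a b : Rˣ) :
    KMW.sym R (a * b) =
      KMW.sym R a + KMW.sym R b + KMW.eta R * KMW.sym R a * KMW.sym R b := by
  have h := RingQuot.mkRingHom_rel (KMWRel.log (R := R) a b)
  simpa [KMW.eta, KMW.sym, map_mul, map_add] using h

lemma swap (a b : Rˣ) :
    KMW.eta R * (KMW.sym R a * KMW.sym R b) = KMW.eta R * (KMW.sym R b * KMW.sym R a) := by
  have h1 := log R a b
  have h2 := log R b a
  rw [mul_comm b a] at h2
  have h3 : KMW.sym R a + KMW.sym R b + KMW.eta R * KMW.sym R a * KMW.sym R b =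
      KMW.sym R b + KMW.sym R a + KMW.eta R * KMW.sym R b * KMW.sym R a :=
    h1.symm.trans h2
  rw [add_comm (KMW.sym R b) (KMW.sym R a)] at h3
  have h4 := add_left_cancel h3
  rw [mul_assoc, mul_assoc] at h4
  exact h4

lemma eta_list_swap (l : List Rˣ) (b : Rˣ) :
    KMW.eta R * ((l.map (KMW.sym R)).prod * KMW.sym R b) =
      KMW.eta R * (KMW.sym R b * (l.map (KMW.sym R)).prod) := by
  induction l with
  | nil => simp
  | cons a l ih =>
      simp only [List.map_cons, List.prod_cons, mul_assoc]
      calc KMW.eta R * (KMW.sym R a * ((l.map (KMW.sym R)).prod * KMW.sym R b))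
          = KMW.sym R a * (KMW.eta R * ((l.map (KMW.sym R)).prod * KMW.sym R b)) :=
            (eta_comm R (KMW.sym R a)).left_comm _
        _ = KMW.sym R a * (KMW.eta R * (KMW.sym R b * (l.map (KMW.sym R)).prod)) := by rw [ih]
        _ = KMW.eta R * (KMW.sym R a * (KMW.sym R b * (l.map (KMW.sym R)).prod)) :=
            ((eta_comm R (KMW.sym R a)).left_comm _).symm
        _ = KMW.eta R * (KMW.sym R a * KMW.sym R b) * (l.map (KMW.sym R)).prod := by
            rw [mul_assoc, mul_assoc]
        _ = KMW.eta R * (KMW.sym R b * KMW.sym R a) * (l.map (KMW.sym R)).prod := by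
            rw [swap]
        _ = KMW.eta R * (KMW.sym R b * (KMW.sym R a * (l.map (KMW.sym R)).prod)) := by
            rw [mul_assoc, mul_assoc]

/-- number of `η`'s in a word -/
def etaCount : List (KMWGen R) → ℕ
  | [] => 0
  | .eta :: l => etaCount l + 1
  | .sym _ :: l => etaCount l

/-- the list of units appearing in a word -/
def symList : List (KMWGen R) → List Rˣ
  | [] => []
  | .eta :: l => symList l
  | .sym a :: l => a :: symList l

lemma prod_eq (l : List (KMWGen R)) :
    (l.map (KMWGen.elem R)).prod =
      KMW.eta R ^ etaCount R l * ((symList R l).map (KMW.sym R)).prod := by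
  induction l with
  | nil => simp [etaCount, symList]
  | cons g l ih =>
      cases g with
      | eta =>
          simp only [List.map_cons, List.prod_cons, etaCount, symList, ih, KMWGen.elem]
          rw [pow_succ', mul_assoc]
      | sym a =>
          simp only [List.map_cons, List.prod_cons, etaCount, symList, ih, KMWGen.elem]
          rw [← mul_assoc, ← ((eta_comm R (KMW.sym R a)).pow_left (etaCount R l)).eq,
            mul_assoc]

lemma weight_sum (l : List (KMWGen R)) :
    (l.map (KMWGen.weight R)).sum = ((symList R l).length : ℤ) - (etaCount R l : ℤ) := by
  induction l with
  | nil => simp [etaCount, symList]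
  | cons g l ih =>
      cases g with
      | eta =>
          simp only [List.map_cons, List.sum_cons, etaCount, symList, ih, KMWGen.weight]
          push_cast; ring
      | sym a =>
          simp only [List.map_cons, List.sum_cons, etaCount, symList, ih, KMWGen.weight,
            List.length_cons]
          push_cast; ring

lemma comm_gens_center (x : KMW R)
    (h : ∀ g : KMWGen R, Commute x (KMWGen.elem R g)) :
    ∀ y : KMW R, y * x = x * y := by
  intro y
  obtain ⟨z, rfl⟩ := RingQuot.mkRingHom_surjective (KMWRel R) y
  have : Commute x (RingQuot.mkRingHom (KMWRel R) z) := by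
    induction z using FreeAlgebra.induction with
    | grade0 r =>
        simp only [algebraMap_int_eq, eq_intCast, map_intCast]
        exact Commute.intCast_right
    | grade1 g =>
        cases g with
        | sym a => exact h (.sym a)
        | eta => exact h .eta
    | mul a b ha hb => rw [map_mul]; exact ha.mul_right hb
    | add a b ha hb => rw [map_add]; exact ha.add_right hb
  exact this.symm.eq

lemma prod_comm_all (l : List (KMWGen R)) (h : (l.map (KMWGen.weight R)).sum = 0) :
    ∀ y : KMW R, y * (l.map (KMWGen.elem R)).prod = (l.map (KMWGen.elem R)).prod * y := by
  apply comm_gens_center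
  rw [prod_eq]
  rw [weight_sum] at h
  intro g
  rcases Nat.eq_zero_or_pos (etaCount R l) with hk | hk
  · have hlen : (symList R l).length = 0 := by omega
    rw [hk, List.length_eq_zero_iff.mp hlen]
    simp
  · obtain ⟨m, hm⟩ : ∃ m, etaCount R l = m + 1 := ⟨etaCount R l - 1, by omega⟩
    rw [hm]
    set E := KMW.eta R with hE
    set P := ((symList R l).map (KMW.sym R)).prod with hP
    cases g with
    | eta => exact (eta_comm R _).symm
    | sym b =>
        show E ^ (m + 1) * P * KMW.sym R b = KMW.sym R b * (E ^ (m + 1) * P)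
        calc E ^ (m + 1) * P * KMW.sym R b
            = E ^ m * (E * (P * KMW.sym R b)) := by
              simp only [pow_succ, mul_assoc]
          _ = E ^ m * (E * (KMW.sym R b * P)) := by rw [hP, eta_list_swap]
          _ = E ^ m * (KMW.sym R b * (E * P)) := by
              rw [(eta_comm R (KMW.sym R b)).left_comm]
          _ = KMW.sym R b * (E ^ m * (E * P)) := by
              rw [(((eta_comm R (KMW.sym R b)).pow_left m).symm).left_comm]
          _ = KMW.sym R b * (E ^ (m + 1) * P) := by
              rw [pow_succ, mul_assoc]

end KMWProof

/-- Every `⟨a⟩ = 1 + η[a]` commutes with `η` and with every generator `[b]`; consequently the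
degree-`0` part of `K'^{MW}_*(R)` (generated by the elements `η[a]`) is contained in the
center, hence is a commutative ring central in `K'^{MW}_*(R)`. -/



theorem KMW.form_central (R : Type) [CommRing R] :
    (∀ a : Rˣ, KMW.form R a * KMW.eta R = KMW.eta R * KMW.form R a) ∧
    (∀ a b : Rˣ, KMW.form R a * KMW.sym R b = KMW.sym R b * KMW.form R a) ∧
    (∀ x ∈ KMW.degreePart R 0, x ∈ Subring.center (KMW R)) := by
  refine ⟨?_, ?_, ?_⟩
  · intro a
    exact ((KMWProof.eta_comm R (KMW.form R a)).symm).eq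
  · intro a b
    rw [KMW.form, add_mul, mul_add, one_mul, mul_one]
    congr 1
    calc KMW.eta R * KMW.sym R a * KMW.sym R b
        = KMW.eta R * (KMW.sym R a * KMW.sym R b) := by rw [mul_assoc]
      _ = KMW.eta R * (KMW.sym R b * KMW.sym R a) := KMWProof.swap R a b
      _ = KMW.sym R b * (KMW.eta R * KMW.sym R a) :=
          (KMWProof.eta_comm R (KMW.sym R b)).left_comm _
  · intro x hx
    have hmem : x ∈ Subalgebra.toSubmodule (Subalgebra.center ℤ (KMW R)) := by
      refine Submodule.span_le.mpr ?_ hx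
      rintro y ⟨l, hl, rfl⟩
      simp only [SetLike.mem_coe, Subalgebra.mem_toSubmodule, Subalgebra.mem_center_iff]
      exact KMWProof.prod_comm_all R l hl
    rw [Subalgebra.mem_toSubmodule, Subalgebra.mem_center_iff] at hmem
    exact Subring.mem_center_iff.mpr hmem
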